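/- arXiv:2303.07444 — 2 statements merged into one kernel-verified Lean document; each statement's English description precedes it below -/
import Mathlib

section
/- Let d be a positive integer. If a graph G has layered tree-independence number at most k, then the (1+2d)-th power G^{1+2d} has layered tree-independence number at most (1+4d)·k. -/
open Classical

/-- A tree decomposition of a graph `G`. -/
structure TreeDecomp {V : Type*} (G : SimpleGraph V) where
  ι : Type
  fin : Fintype ι
  T : SimpleGraph ι
  isTree : T.IsTree
  bag : ι → Set V
  mem_bag : ∀ v : V, ∃ t, v ∈ bag t
  edge_bag : ∀ ⦃u v : V⦄, G.Adj u v → ∃ t, u ∈ bag t ∧ v ∈ bag t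
  bag_connected : ∀ v : V, (T.induce {t | v ∈ bag t}).Connected

/-- `I` is an independent set of `G` contained in `S`, i.e. an independent set of `G[S]`. -/
def IsIndepSetIn {V : Type*} (G : SimpleGraph V) (S : Set V) (I : Finset V) : Prop :=
  ↑I ⊆ S ∧ ∀ u ∈ I, ∀ v ∈ I, u ≠ v → ¬ G.Adj u v

/-- `α(G[S]) ≤ k`. -/
def IndepLE {V : Type*} (G : SimpleGraph V) (S : Set V) (k : ℕ) : Prop :=
  ∀ I : Finset V, IsIndepSetIn G S I → I.card ≤ k

/-- The independence number of the tree decomposition is at most `k`. -/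
def TreeDecomp.IndepNumLE {V : Type*} {G : SimpleGraph V} (td : TreeDecomp G) (k : ℕ) : Prop :=
  ∀ t : td.ι, IndepLE G (td.bag t) k

/-- The tree-independence number of `G` is at most `k`. -/
def treeAlphaLE {V : Type*} (G : SimpleGraph V) (k : ℕ) : Prop :=
  ∃ td : TreeDecomp G, td.IndepNumLE k

/-- The tree-independence number of `G`. -/
noncomputable def treeAlpha {V : Type*} (G : SimpleGraph V) : ℕ :=
  sInf {k | treeAlphaLE G k}

/-- A layering of `G`, encoded by the function sending a vertex to the index of its layer. -/
def IsLayering {V : Type*} (G : SimpleGraph V) (L : V → ℕ) : Prop :=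
  ∀ ⦃u v : V⦄, G.Adj u v → (L u : ℤ) ≤ (L v : ℤ) + 1

/-- The layered tree-independence number of `G` is at most `k`. -/
def layeredTreeAlphaLE {V : Type*} (G : SimpleGraph V) (k : ℕ) : Prop :=
  ∃ (td : TreeDecomp G) (L : V → ℕ), IsLayering G L ∧
    ∀ (t : td.ι) (i : ℕ), IndepLE G (td.bag t ∩ {v | L v = i}) k

/-- The layered tree-independence number of `G`. -/
noncomputable def layeredTreeAlpha {V : Type*} (G : SimpleGraph V) : ℕ :=
  sInf {k | layeredTreeAlphaLE G k}

/-- The number of elements of the multiset `𝒞` containing `v` (with multiplicity). -/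
noncomputable def coverCount {V : Type*} (𝒞 : Multiset (Set V)) (v : V) : ℕ :=
  Multiset.countP (fun C => v ∈ C) 𝒞

/-- `𝒞` is a `β`-general cover: every vertex belongs to at least `β·|𝒞|` elements. -/
def IsGeneralCover {V : Type*} (β : ℝ) (𝒞 : Multiset (Set V)) : Prop :=
  𝒞 ≠ 0 ∧ ∀ v : V, β * (Multiset.card 𝒞 : ℝ) ≤ (coverCount 𝒞 v : ℝ)

/-- The intersection graph of an (indexed) family of sets. -/
def intersectionGraph {ι : Type*} {α : Type*} (D : ι → Set α) : SimpleGraph ι where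
  Adj i j := i ≠ j ∧ (D i ∩ D j).Nonempty
  symm := by
    constructor
    rintro i j ⟨hne, x, hx1, hx2⟩
    exact ⟨hne.symm, x, hx2, hx1⟩
  loopless := by
    constructor
    rintro i ⟨hne, -⟩
    exact hne rfl

/-- The `p`-th power of a graph. -/
def gpower {V : Type*} (G : SimpleGraph V) (p : ℕ) : SimpleGraph V where
  Adj u v := u ≠ v ∧ ∃ w : G.Walk u v, w.length ≤ p
  symm := by
    constructor
    rintro u v ⟨hne, w, hw⟩
    exact ⟨hne.symm, w.reverse, by simpa using hw⟩
  loopless := by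
    constructor
    rintro u ⟨hne, -⟩
    exact hne rfl

/-- The axis-aligned closed hypercube of side length `r` with lower corner `x`. -/
def cube (d : ℕ) (x : EuclideanSpace ℝ (Fin d)) (r : ℝ) : Set (EuclideanSpace ℝ (Fin d)) :=
  {y | ∀ i, x i ≤ y i ∧ y i ≤ x i + r}

/-- The size of an object: the side length of its smallest enclosing axis-aligned hypercube. -/
noncomputable def objSize (d : ℕ) (O : Set (EuclideanSpace ℝ (Fin d))) : ℝ :=
  sInf {r : ℝ | 0 ≤ r ∧ ∃ x, O ⊆ cube d x r}

/-- The collection `O` is `c`-fat. -/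
def IsFat {ι : Type*} (d : ℕ) (c : ℝ) (O : ι → Set (EuclideanSpace ℝ (Fin d))) : Prop :=
  ∀ r : ℝ, 0 < r → ∀ x : EuclideanSpace ℝ (Fin d), ∀ P : Finset ι,
    (∀ i ∈ P, ∀ j ∈ P, i ≠ j → Disjoint (O i) (O j)) →
    (∀ i ∈ P, (O i ∩ cube d x r).Nonempty ∧ r ≤ objSize d (O i)) →
    ∃ pts : Finset (EuclideanSpace ℝ (Fin d)),
      (pts.card : ℝ) ≤ c ∧ ∀ i ∈ P, ∃ p ∈ pts, p ∈ O i

/-- The `n`-dimensional grid graph of width `n`. -/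
def gridGraphN (n : ℕ) : SimpleGraph (Fin n → Fin n) where
  Adj a b := ∑ i, ((a i : ℤ) - (b i : ℤ)).natAbs = 1
  symm := by
    constructor
    intro a b h
    rw [← h]
    exact Finset.sum_congr rfl fun i _ => by omega
  loopless := by
    constructor
    intro a h
    simp at h

/-- The grid graph on `ℤ²`. -/
def latticeGraph : SimpleGraph (ℤ × ℤ) where
  Adj p q := (p.1 - q.1).natAbs + (p.2 - q.2).natAbs = 1
  symm := by
    constructor
    intro p q h
    omega
  loopless := by
    constructor
    intro p h
    simp at h

/-- `P` is (the vertex set of) a path on the integer grid: a finite nonempty subset of `ℤ²`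
whose induced subgraph in the grid graph is a path. -/
def IsGridPath (P : Set (ℤ × ℤ)) : Prop :=
  P.Finite ∧ P.Nonempty ∧ (latticeGraph.induce P).IsTree ∧
    ∀ v : P, ((latticeGraph.induce P).neighborSet v).ncard ≤ 2

/-!
Replace every bag `X_t` of a layered decomposition of `G` by its closed `d`-neighbourhood and
merge the layers of `L` into blocks of `1 + 2d` consecutive ones, i.e. use the layering
`L / (1 + 2d)`. A walk of length at most `1 + 2d` has an edge whose ends are within distance `d`
of its two endpoints, so the new bags cover the edges of `G^(1+2d)`. Given an independent set `I`
of `G^(1+2d)` inside one new bag and one new layer, send every `v ∈ I` to a vertex of `X_t`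
within distance `d`. Distinct vertices of `I` are at distance more than `1 + 2d`, so this map is
injective and its image is independent in `G`; and the image meets only the `1 + 4d` layers of
`L` within distance `d` of the block, each of which contributes at most `k` vertices.
-/

open SimpleGraph

variable {V : Type*} {G : SimpleGraph V}

lemma IsIndepSetIn.mono {S S' : Set V} {I : Finset V} (hI : IsIndepSetIn G S I) (hS : S ⊆ S') :
    IsIndepSetIn G S' I :=
  ⟨hI.1.trans hS, hI.2⟩

lemma IndepLE.mono {S S' : Set V} {k : ℕ} (h : IndepLE G S' k) (hS : S ⊆ S') : IndepLE G S k :=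
  fun I hI => h I (hI.mono hS)

lemma IndepLE.inter_preimage {β : Type*} {S : Set V} {f : V → β} {s : Finset β} {k : ℕ}
    (h : ∀ b ∈ s, IndepLE G (S ∩ {v | f v = b}) k) : IndepLE G (S ∩ f ⁻¹' s) (s.card * k) := by
  intro I hI
  rw [mul_comm]
  refine Finset.card_le_mul_card_image_of_maps_to (fun v hv => (hI.1 hv).2) k fun b hb => ?_
  refine h b hb _ ⟨fun v hv => ?_, fun u hu v hv => hI.2 u (Finset.mem_of_mem_filter u hu) v
    (Finset.mem_of_mem_filter v hv)⟩
  obtain ⟨hvI, rfl⟩ := Finset.mem_filter.mp hv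
  exact ⟨(hI.1 hvI).1, rfl⟩

lemma IsLayering.le_add_length {L : V → ℕ} (hL : IsLayering G L) {u v : V} (w : G.Walk u v) :
    (L u : ℤ) ≤ L v + w.length := by
  induction w with
  | nil => simp
  | cons h _ ih =>
    have := hL h
    push_cast [Walk.length_cons]
    omega

lemma IsLayering.gpower_div {L : V → ℕ} (hL : IsLayering G L) {p : ℕ} (hp : 0 < p) :
    IsLayering (gpower G p) (fun v => L v / p) := by
  rintro u v ⟨-, w, hw⟩
  have hle : L u ≤ L v + p := by have := hL.le_add_length w; omega
  have : L u / p ≤ L v / p + 1 :=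
    (Nat.div_le_div_right hle).trans_eq (Nat.add_div_right _ hp)
  exact_mod_cast this

lemma gpower_adj_of_walks {d : ℕ} {x x' v v' : V} (w : G.Walk x v) (w' : G.Walk x' v')
    (hw : w.length ≤ d) (hw' : w'.length ≤ d) (hx : x = x' ∨ G.Adj x x') (hne : v ≠ v') :
    (gpower G (1 + 2 * d)).Adj v v' := by
  refine ⟨hne, ?_⟩
  rcases hx with rfl | hadj
  · exact ⟨w.reverse.append w', by simp only [Walk.length_append, Walk.length_reverse]; omega⟩
  · exact ⟨w.reverse.append (.cons hadj w'), by
      simp only [Walk.length_append, Walk.length_reverse, Walk.length_cons]; omega⟩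

def closedNbhd (G : SimpleGraph V) (d : ℕ) (S : Set V) : Set V :=
  {v | ∃ u ∈ S, ∃ w : G.Walk u v, w.length ≤ d}

lemma subset_closedNbhd (d : ℕ) (S : Set V) : S ⊆ closedNbhd G d S :=
  fun v hv => ⟨v, hv, .nil, Nat.zero_le d⟩

namespace TreeDecomp

lemma connected_induce_bags_support (td : TreeDecomp G) {u v : V} (w : G.Walk u v) :
    (td.T.induce {t | ∃ x ∈ w.support, x ∈ td.bag t}).Connected := by
  induction w with
  | @nil u =>
    have hsingle : {t | ∃ x ∈ (Walk.nil : G.Walk u u).support, x ∈ td.bag t} =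
        {t | u ∈ td.bag t} := by
      ext t
      simp
    rw [hsingle]
    exact td.bag_connected u
  | @cons u x _ h w ih =>
    have hsplit : {t | ∃ y ∈ (Walk.cons h w).support, y ∈ td.bag t} =
        {t | u ∈ td.bag t} ∪ {t | ∃ y ∈ w.support, y ∈ td.bag t} := by
      ext t
      simp [or_and_right, exists_or]
    obtain ⟨t, hut, hxt⟩ := td.edge_bag h
    rw [hsplit]
    exact induce_union_connected (td.bag_connected u).preconnected ih.preconnected
      ⟨t, hut, x, w.start_mem_support, hxt⟩

def thicken (td : TreeDecomp G) (d : ℕ) : TreeDecomp (gpower G (1 + 2 * d)) where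
  ι := td.ι
  fin := td.fin
  T := td.T
  isTree := td.isTree
  bag t := closedNbhd G d (td.bag t)
  mem_bag v := (td.mem_bag v).imp fun _ ht => subset_closedNbhd d _ ht
  edge_bag := by
    rintro a b ⟨-, w, hw⟩
    by_cases hshort : w.length ≤ d
    · obtain ⟨t, ht⟩ := td.mem_bag a
      exact ⟨t, subset_closedNbhd d _ ht, a, ht, w, hshort⟩
    · obtain ⟨t, ht, ht'⟩ := td.edge_bag (w.adj_getVert_succ (not_le.mp hshort))
      refine ⟨t, ⟨_, ht, (w.take d).reverse, ?_⟩, ⟨_, ht', w.drop (d + 1), ?_⟩⟩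
      · simp [Walk.take_length]
      · rw [Walk.drop_length]; omega
  bag_connected v := by
    obtain ⟨t₀, ht₀⟩ := td.mem_bag v
    refine induce_connected_of_patches t₀ (subset_closedNbhd d _ ht₀) fun {t} ht => ?_
    obtain ⟨u, hut, w, hw⟩ := ht
    have hpatch : {t | ∃ x ∈ w.support, x ∈ td.bag t} ⊆ {t | v ∈ closedNbhd G d (td.bag t)} :=
      fun s ⟨x, hx, hxs⟩ => ⟨x, hxs, w.dropUntil x hx, (w.length_dropUntil_le_length hx).trans hw⟩
    exact ⟨_, hpatch, ⟨v, w.end_mem_support, ht₀⟩, ⟨u, w.start_mem_support, hut⟩,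
      (td.connected_induce_bags_support w).preconnected _ _⟩

end TreeDecomp

lemma IsIndepSetIn.card_le_of_walks {S T : Set V} {I : Finset V} {d m : ℕ}
    (hI : IsIndepSetIn (gpower G (1 + 2 * d)) S I) (hT : IndepLE G T m) (u : V → V)
    (hu : ∀ v ∈ I, u v ∈ T ∧ ∃ w : G.Walk (u v) v, w.length ≤ d) : I.card ≤ m := by
  have hfar : ∀ v ∈ I, ∀ v' ∈ I, v ≠ v' → u v ≠ u v' ∧ ¬ G.Adj (u v) (u v') := by
    intro v hv v' hv' hne
    obtain ⟨w, hw⟩ := (hu v hv).2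
    obtain ⟨w', hw'⟩ := (hu v' hv').2
    exact ⟨fun heq => hI.2 v hv v' hv' hne (gpower_adj_of_walks w w' hw hw' (.inl heq) hne),
      fun hadj => hI.2 v hv v' hv' hne (gpower_adj_of_walks w w' hw hw' (.inr hadj) hne)⟩
  have hinj : Set.InjOn u I := fun v hv v' hv' heq =>
    not_not.mp fun hne => (hfar v hv v' hv' hne).1 heq
  rw [← Finset.card_image_of_injOn hinj]
  refine hT _ ⟨?_, ?_⟩
  · intro x hx
    obtain ⟨v, hv, rfl⟩ := Finset.mem_image.mp hx
    exact (hu v hv).1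
  · simp only [Finset.mem_image]
    rintro _ ⟨v, hv, rfl⟩ _ ⟨v', hv', rfl⟩ hne
    exact (hfar v hv v' hv' (ne_of_apply_ne u hne)).2

lemma IndepLE.closedNbhd_inter_layer {X : Set V} {L : V → ℕ} {d k : ℕ} (hL : IsLayering G L)
    (hk : ∀ i, IndepLE G (X ∩ {v | L v = i}) k) (i : ℕ) :
    IndepLE (gpower G (1 + 2 * d)) (closedNbhd G d X ∩ {v | L v / (1 + 2 * d) = i})
      ((1 + 4 * d) * k) := by
  intro I hI
  choose! u hu using fun v (hv : v ∈ I) => (hI.1 hv).1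
  set a := i * (1 + 2 * d)
  have hlayers :
      IndepLE G (X ∩ (fun v => L v + d) ⁻¹' Finset.Icc a (a + 4 * d)) ((1 + 4 * d) * k) := by
    have := IndepLE.inter_preimage (f := fun v => L v + d) (s := Finset.Icc a (a + 4 * d))
      fun b _ => (hk (b - d)).mono fun v ⟨hvX, hv⟩ =>
        ⟨hvX, by simp only [Set.mem_ofPred_eq] at hv ⊢; omega⟩
    rwa [Nat.card_Icc, show a + 4 * d + 1 - a = 1 + 4 * d by omega] at this
  refine hI.card_le_of_walks hlayers u fun v hv => ⟨⟨(hu v hv).1, ?_⟩, (hu v hv).2⟩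
  obtain ⟨w, hw⟩ := (hu v hv).2
  have hnear := hL.le_add_length w
  have hnear' := hL.le_add_length w.reverse
  rw [Walk.length_reverse] at hnear'
  have hv_layer : L v / (1 + 2 * d) = i := (hI.1 hv).2
  have hlo : a ≤ L v := by simpa [hv_layer] using Nat.div_mul_le_self (L v) (1 + 2 * d)
  have hhi : L v < a + (1 + 2 * d) := by
    simpa [hv_layer] using Nat.lt_div_mul_add (a := L v) (show 0 < 1 + 2 * d by omega)
  simp only [Set.mem_preimage, Finset.coe_Icc, Set.mem_Icc]
  omega

lemma layeredTreeAlphaLE.mono {k k' : ℕ} (h : layeredTreeAlphaLE G k) (hk : k ≤ k') :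
    layeredTreeAlphaLE G k' := by
  obtain ⟨td, L, hL, hbags⟩ := h
  exact ⟨td, L, hL, fun t i I hI => (hbags t i I hI).trans hk⟩

lemma layeredTreeAlphaLE_card [Fintype V] : layeredTreeAlphaLE G (Fintype.card V) := by
  let td : TreeDecomp G :=
    { ι := Unit, fin := inferInstance, T := ⊥, isTree := .of_subsingleton,
      bag := fun _ => Set.univ, mem_bag := fun _ => ⟨(), trivial⟩,
      edge_bag := fun _ _ _ => ⟨(), trivial, trivial⟩,
      bag_connected := fun v =>
        haveI : Nonempty {_t : Unit | v ∈ Set.univ} := ⟨⟨(), trivial⟩⟩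
        .of_subsingleton }
  exact ⟨td, fun _ => 0, fun _ _ _ => by simp, fun _ _ I _ => I.card_le_univ⟩

lemma layeredTreeAlphaLE_of_layeredTreeAlpha_le [Fintype V] {k : ℕ}
    (h : layeredTreeAlpha G ≤ k) : layeredTreeAlphaLE G k :=
  layeredTreeAlphaLE.mono (Nat.sInf_mem (s := {k | layeredTreeAlphaLE G k})
    ⟨_, layeredTreeAlphaLE_card⟩) h

lemma layeredTreeAlphaLE.gpower {k : ℕ} (h : layeredTreeAlphaLE G k) (d : ℕ) :
    layeredTreeAlphaLE (gpower G (1 + 2 * d)) ((1 + 4 * d) * k) := by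
  obtain ⟨td, L, hL, hbags⟩ := h
  exact ⟨td.thicken d, fun v => L v / (1 + 2 * d), hL.gpower_div (by omega),
    fun t => IndepLE.closedNbhd_inter_layer hL (hbags t)⟩

theorem stmt3_general {V : Type} [Fintype V] (G : SimpleGraph V) (d : ℕ) (k : ℕ)
    (h : layeredTreeAlpha G ≤ k) :
    layeredTreeAlpha (gpower G (1 + 2 * d)) ≤ (1 + 4 * d) * k :=
  Nat.sInf_le ((layeredTreeAlphaLE_of_layeredTreeAlpha_le h).gpower d)

/-- If `G` has layered tree-independence number at most `k`, then `G^{1+2d}` has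
layered tree-independence number at most `(1+4d)·k`. -/
theorem stmt3 {V : Type} [Fintype V] (G : SimpleGraph V) (d : ℕ) (hd : 1 ≤ d) (k : ℕ)
    (h : layeredTreeAlpha G ≤ k) :
    layeredTreeAlpha (gpower G (1 + 2 * d)) ≤ (1 + 4 * d) * k :=
  stmt3_general G d k h
end

section
/- For every m ∈ ℕ and every integer r > 2, there exists n ∈ ℕ such that every (1 − 1/r)-general cover 𝒞 of the n-dimensional grid graph G_n of width n contains an element C with tree-α(G_n[C]) ≥ m. Consequently, the class {G_n : n ∈ ℕ} is not fractionally tree-α-fragile. -/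
open Classical

/-!
If `G` is triangle-free and `G[C]` has a tree decomposition whose bags have independence number
at most `k`, then every nonempty `U ⊆ C` contains a vertex with at most `k` neighbours in `U`:
rooting the tree, a vertex of `U` whose topmost bag is deepest has all its `U`-neighbours in that
bag, and these neighbours are pairwise non-adjacent. So `G[C]` is `k`-degenerate and its degree
sum is at most `2k|C|`.

The grid `G_n` is bipartite, and by averaging a `(1 - 1/r)`-general cover with `r ≥ 3` has a member
`C` containing at least two thirds of the `n^n` vertices. Of the `(n - 1) n^n` edges
`v → v + e_i`, each vertex outside `C` lies on at most `2n`, so for `n ≥ 3(m + 1)` at least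
`m n^n` of them lie inside `C`, and the degree sum of `G_n[C]` is at least `2m|C|`; hence
`tree-α(G_n[C]) ≥ m`.
-/

open Finset

namespace SimpleGraph

variable {ι : Type*} {T : SimpleGraph ι} {a b x : ι}

theorem IsAcyclic.eq_of_isPath (hT : T.IsAcyclic) {p q : T.Walk a b} (hp : p.IsPath)
    (hq : q.IsPath) : p = q :=
  Subtype.mk.inj <| (hT.subsingleton_path a b).elim ⟨p, hp⟩ ⟨q, hq⟩

theorem IsAcyclic.support_subset_of_isPath (hT : T.IsAcyclic) {p : T.Walk a b} (hp : p.IsPath)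
    (w : T.Walk a b) : p.support ⊆ w.support := by
  rw [hT.eq_of_isPath hp w.bypass_isPath]
  exact w.support_bypass_subset_support

theorem IsAcyclic.mem_of_mem_support_of_isPath (hT : T.IsAcyclic) {S : Set ι}
    (hS : (T.induce S).Connected) (ha : a ∈ S) (hb : b ∈ S) {p : T.Walk a b} (hp : p.IsPath)
    (hx : x ∈ p.support) : x ∈ S := by
  obtain ⟨w⟩ := hS.preconnected ⟨a, ha⟩ ⟨b, hb⟩
  have hxw : x ∈ (w.map (Embedding.induce S).toHom).support :=
    hT.support_subset_of_isPath hp _ hx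
  rw [Walk.support_map, List.mem_map] at hxw
  obtain ⟨y, -, rfl⟩ := hxw
  exact y.2

theorem IsAcyclic.length_eq_dist_of_isPath (hT : T.IsAcyclic) {p : T.Walk a b} (hp : p.IsPath) :
    p.length = T.dist a b := by
  obtain ⟨q, hq, hqd⟩ := p.reachable.exists_path_of_dist
  rw [hT.eq_of_isPath hp hq, hqd]

theorem IsAcyclic.dist_add_dist_of_mem_support (hT : T.IsAcyclic) {p : T.Walk a b}
    (hp : p.IsPath) (hx : x ∈ p.support) : T.dist a x + T.dist x b = T.dist a b := by
  rw [← hT.length_eq_dist_of_isPath (hp.takeUntil hx),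
    ← hT.length_eq_dist_of_isPath (hp.dropUntil hx), ← hT.length_eq_dist_of_isPath hp,
    ← Walk.length_append, p.take_spec hx]

theorem Walk.IsPath.append {u v w : ι} {p : T.Walk u v} {q : T.Walk v w} (hp : p.IsPath)
    (hq : q.IsPath) (h : ∀ x ∈ p.support, x ∈ q.support → x = v) : (p.append q).IsPath := by
  rw [Walk.isPath_def, Walk.support_append]
  have hq' := hq.support_nodup
  rw [← q.cons_tail_support, List.nodup_cons] at hq'
  refine hp.support_nodup.append hq'.2 fun x hxp hxq => ?_
  exact hq'.1 (h x hxp (q.cons_tail_support ▸ List.mem_cons_of_mem _ hxq) ▸ hxq)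

variable {r t s : ι} {S S' : Set ι}

theorem IsTree.mem_support_of_forall_dist_le (hT : T.IsTree) (hS : (T.induce S).Connected)
    (ht : t ∈ S) (hmin : ∀ y ∈ S, T.dist r t ≤ T.dist r y) (hs : s ∈ S) {p : T.Walk r s}
    (hp : p.IsPath) : t ∈ p.support := by
  obtain ⟨q₁, hq₁, -⟩ := (hT.connected r t).exists_path_of_dist
  obtain ⟨q₂, hq₂, -⟩ := (hT.connected t s).exists_path_of_dist
  have hcap : ∀ y ∈ q₁.support, y ∈ q₂.support → y = t := by
    intro y hy₁ hy₂
    have hrt := hT.isAcyclic.dist_add_dist_of_mem_support hq₁ hy₁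
    have hty := hmin y (hT.isAcyclic.mem_of_mem_support_of_isPath hS ht hs hq₂ hy₂)
    have hyt : T.dist y t = 0 := by omega
    exact ((hT.connected y t).dist_eq_zero_iff).mp hyt
  rw [hT.isAcyclic.eq_of_isPath hp (hq₁.append hq₂ hcap), Walk.mem_support_append_iff]
  exact Or.inl q₁.end_mem_support

theorem IsTree.mem_of_forall_dist_le (hT : T.IsTree) (hS : (T.induce S).Connected)
    (hS' : (T.induce S').Connected) (ht : t ∈ S) (hmin : ∀ y ∈ S, T.dist r t ≤ T.dist r y)
    {t' : ι} (ht' : t' ∈ S') (hmin' : ∀ y ∈ S', T.dist r t' ≤ T.dist r y)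
    (hle : T.dist r t' ≤ T.dist r t) (hs : s ∈ S) (hs' : s ∈ S') : t ∈ S' := by
  obtain ⟨p, hp, -⟩ := (hT.connected r s).exists_path_of_dist
  have htp := hT.mem_support_of_forall_dist_le hS ht hmin hs hp
  have ht'p := hT.mem_support_of_forall_dist_le hS' ht' hmin' hs' hp
  rw [← p.take_spec ht'p, Walk.mem_support_append_iff] at htp
  rcases htp with hup | hdown
  · have h := hT.isAcyclic.dist_add_dist_of_mem_support (hp.takeUntil ht'p) hup
    have htt' : T.dist t t' = 0 := by omega
    rwa [((hT.connected t t').dist_eq_zero_iff).mp htt']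
  · exact hT.isAcyclic.mem_of_mem_support_of_isPath hS' ht' hs' (hp.dropUntil ht'p) hdown

end SimpleGraph

namespace TreeDecomp

variable {V : Type*}

/-- Pick `u ∈ U` whose bag closest to a root `r` is farthest from `r`: the bags of a neighbour `w`
of `u` form a subtree meeting that of `u` whose top is no deeper, so it contains the top of `u`. -/
theorem exists_forall_adj_mem_bag {H : SimpleGraph V} (td : TreeDecomp H) {U : Finset V}
    (hU : U.Nonempty) : ∃ u ∈ U, ∃ t, u ∈ td.bag t ∧ ∀ w ∈ U, H.Adj u w → w ∈ td.bag t := by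
  let _ : Fintype td.ι := td.fin
  obtain ⟨r⟩ := td.isTree.connected.nonempty
  have htop : ∀ v, ∃ t, v ∈ td.bag t ∧ ∀ t', v ∈ td.bag t' → td.T.dist r t ≤ td.T.dist r t' := by
    intro v
    obtain ⟨t₀, ht₀⟩ := td.mem_bag v
    obtain ⟨t, ht, hmin⟩ :=
      (univ.filter fun t => v ∈ td.bag t).exists_min_image (td.T.dist r) ⟨t₀, by simpa⟩
    exact ⟨t, (mem_filter.mp ht).2, fun t' ht' => hmin t' (by simpa)⟩
  choose top hmem hmin using htop
  obtain ⟨u, hu, hmax⟩ := U.exists_max_image (fun v => td.T.dist r (top v)) hU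
  refine ⟨u, hu, top u, hmem u, fun w hw hadj => ?_⟩
  obtain ⟨s, hus, hws⟩ := td.edge_bag hadj
  exact td.isTree.mem_of_forall_dist_le (td.bag_connected u) (td.bag_connected w) (hmem u)
    (hmin u) (hmem w) (hmin w) (hmax w hw) hus hws

theorem exists_card_adj_le {G : SimpleGraph V} (hG : G.CliqueFree 3) {C : Set V} {k : ℕ}
    (td : TreeDecomp (G.induce C)) (htd : td.IndepNumLE k) {U : Finset V} (hUC : ↑U ⊆ C)
    (hU : U.Nonempty) : ∃ u ∈ U, #{w ∈ U | G.Adj u w} ≤ k := by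
  obtain ⟨v, hv⟩ := hU
  obtain ⟨u, hu, t, -, hbag⟩ :=
    td.exists_forall_adj_mem_bag (U := U.subtype (· ∈ C)) ⟨⟨v, hUC hv⟩, mem_subtype.mpr hv⟩
  set N : Finset C := {w ∈ U.subtype (· ∈ C) | (G.induce C).Adj u w}
  have hN : IsIndepSetIn (G.induce C) (td.bag t) N := by
    refine ⟨fun w hw => hbag w (mem_filter.mp hw).1 (mem_filter.mp hw).2, ?_⟩
    intro w₁ hw₁ w₂ hw₂ hne hadj
    exact hG {↑u, ↑w₁, ↑w₂} ((G.is3Clique_triple_iff (a := u) (b := w₁) (c := w₂)).mpr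
      ⟨(mem_filter.mp hw₁).2, (mem_filter.mp hw₂).2, hadj⟩)
  refine ⟨u, mem_subtype.mp hu, le_trans ?_ (htd t N hN)⟩
  rw [← card_map (Function.Embedding.subtype (· ∈ C))]
  refine card_le_card fun w hw => ?_
  obtain ⟨hwU, hadj⟩ := mem_filter.mp hw
  exact mem_map.mpr ⟨⟨w, hUC hwU⟩, mem_filter.mpr ⟨mem_subtype.mpr hwU, hadj⟩, rfl⟩

end TreeDecomp

namespace SimpleGraph

variable {V : Type*} (G : SimpleGraph V)

theorem sum_card_adj_eq_sum_card_adj_erase_add {W : Finset V} {u : V} (hu : u ∈ W) :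
    ∑ v ∈ W, #{w ∈ W | G.Adj v w}
      = ∑ v ∈ W.erase u, #{w ∈ W.erase u | G.Adj v w} + 2 * #{w ∈ W | G.Adj u w} := by
  simp only [card_filter]
  have hcol : ∑ v ∈ W.erase u, (if G.Adj v u then 1 else 0)
      = ∑ w ∈ W, if G.Adj u w then 1 else 0 := by
    rw [← sum_erase_add W (fun w => if G.Adj u w then 1 else 0) hu, if_neg (G.irrefl (v := u)),
      add_zero]
    exact sum_congr rfl fun v _ => by rw [G.adj_comm]
  have hrow : ∀ v, ∑ w ∈ W, (if G.Adj v w then 1 else 0)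
      = ∑ w ∈ W.erase u, (if G.Adj v w then 1 else 0) + if G.Adj v u then 1 else 0 :=
    fun v => (sum_erase_add W (fun w => if G.Adj v w then 1 else 0) hu).symm
  rw [← sum_erase_add W (fun v => ∑ w ∈ W, if G.Adj v w then 1 else 0) hu,
    sum_congr rfl fun v _ => hrow v, sum_add_distrib, hcol]
  ring

theorem sum_card_adj_eq_card_filter_adj (W : Finset V) :
    ∑ v ∈ W, #{w ∈ W | G.Adj v w} = #{q ∈ W ×ˢ W | G.Adj q.1 q.2} := by
  rw [card_filter, sum_product]
  exact sum_congr rfl fun v _ => card_filter _ _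

theorem sum_card_adj_le_of_forall_exists {k : ℕ} {W : Finset V}
    (h : ∀ U ⊆ W, U.Nonempty → ∃ u ∈ U, #{w ∈ U | G.Adj u w} ≤ k) :
    ∑ v ∈ W, #{w ∈ W | G.Adj v w} ≤ 2 * k * #W := by
  induction W using Finset.strongInduction with
  | H W ih =>
    rcases W.eq_empty_or_nonempty with rfl | hW
    · simp
    obtain ⟨u, hu, hdeg⟩ := h W subset_rfl hW
    have hrest := ih (W.erase u) (erase_ssubset hu) fun U hU => h U (hU.trans (erase_subset u W))
    rw [sum_card_adj_eq_sum_card_adj_erase_add G hu, ← card_erase_add_one hu]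
    nlinarith

end SimpleGraph

theorem treeAlphaLE_natCard {V : Type*} [Finite V] (G : SimpleGraph V) :
    treeAlphaLE G (Nat.card V) := by
  have : Fintype V := Fintype.ofFinite V
  refine ⟨⟨Unit, inferInstance, ⊥, .of_subsingleton, fun _ => Set.univ, fun _ => ⟨(), trivial⟩,
    fun _ _ _ => ⟨(), trivial, trivial⟩, fun v => ?_⟩, fun _ I _ => ?_⟩
  · have : Nonempty {t : Unit | v ∈ Set.univ} := ⟨⟨(), trivial⟩⟩
    exact SimpleGraph.IsTree.of_subsingleton.connected
  · rw [Nat.card_eq_fintype_card]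
    exact card_le_univ I

theorem le_treeAlpha_induce {V : Type*} [Finite V] {G : SimpleGraph V} (hG : G.CliqueFree 3)
    {C : Set V} {W : Finset V} (hWC : ↑W ⊆ C) (hW : W.Nonempty) {m : ℕ}
    (h : 2 * m * #W ≤ ∑ v ∈ W, #{w ∈ W | G.Adj v w}) : m ≤ treeAlpha (G.induce C) := by
  obtain ⟨td, htd⟩ : treeAlphaLE (G.induce C) (treeAlpha (G.induce C)) :=
    Nat.sInf_mem (s := {k | treeAlphaLE (G.induce C) k}) ⟨_, treeAlphaLE_natCard _⟩
  have hdeg := G.sum_card_adj_le_of_forall_exists fun U hU hUne =>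
    td.exists_card_adj_le hG htd ((coe_subset.mpr hU).trans hWC) hUne
  have : 2 * m * #W ≤ 2 * treeAlpha (G.induce C) * #W := h.trans hdeg
  have := Nat.le_of_mul_le_mul_right this hW.card_pos
  omega

theorem sum_coverCount {V : Type*} [Fintype V] (𝒞 : Multiset (Set V)) :
    ∑ v, coverCount 𝒞 v = (𝒞.map fun C => #{v | v ∈ C}).sum := by
  induction 𝒞 using Multiset.induction with
  | empty => simp [coverCount]
  | cons C 𝒞 ih =>
    simp only [coverCount, Multiset.countP_cons, sum_add_distrib, Multiset.map_cons,
      Multiset.sum_cons, card_filter] at ih ⊢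
    rw [ih, add_comm]

theorem IsGeneralCover.exists_mem_le_card {V : Type*} [Fintype V] {β : ℝ}
    {𝒞 : Multiset (Set V)} (h𝒞 : IsGeneralCover β 𝒞) :
    ∃ C ∈ 𝒞, β * Fintype.card V ≤ #{v | v ∈ C} := by
  obtain ⟨C, hC, hmax⟩ := Multiset.exists_max_image (fun C => #{v | v ∈ C}) h𝒞.1
  refine ⟨C, hC, le_of_mul_le_mul_left ?_ (Nat.cast_pos.mpr (Multiset.card_pos.mpr h𝒞.1))⟩
  have hsum : (𝒞.map fun C => #{v | v ∈ C}).sum ≤ Multiset.card 𝒞 * #{v | v ∈ C} := by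
    have := Multiset.sum_le_card_nsmul (𝒞.map fun C => #{v | v ∈ C}) _ fun _ hx => by
      obtain ⟨D, hD, rfl⟩ := Multiset.mem_map.mp hx
      exact hmax D hD
    rwa [Multiset.card_map, smul_eq_mul] at this
  calc (Multiset.card 𝒞 : ℝ) * (β * Fintype.card V) = ∑ _v : V, β * Multiset.card 𝒞 := by
        rw [sum_const, card_univ, nsmul_eq_mul]; ring
    _ ≤ ∑ v, (coverCount 𝒞 v : ℝ) := sum_le_sum fun v _ => h𝒞.2 v
    _ ≤ _ := by exact_mod_cast (sum_coverCount 𝒞).trans_le hsum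

namespace gridGraphN

variable {n : ℕ} {i j : Fin n} {v w : Fin n → Fin n}

/-- `v + e_i`, or `v` itself when `v i = n - 1`. -/
def up (i : Fin n) (v : Fin n → Fin n) : Fin n → Fin n :=
  Function.update v i (if h : (v i : ℕ) + 1 < n then ⟨v i + 1, h⟩ else v i)

theorem val_up_self (h : (v i : ℕ) + 1 < n) : (up i v i : ℕ) = v i + 1 := by
  simp [up, h]

theorem up_apply_of_ne (hj : j ≠ i) : up i v j = v j :=
  Function.update_of_ne hj _ _

theorem adj_up (h : (v i : ℕ) + 1 < n) : (gridGraphN n).Adj v (up i v) := by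
  show ∑ j, ((v j : ℤ) - (up i v j : ℤ)).natAbs = 1
  rw [sum_eq_single i (fun j _ hj => by rw [up_apply_of_ne hj]; simp) (by simp)]
  have := val_up_self h
  omega

theorem up_injective (hv : (v i : ℕ) + 1 < n) (hw : (w i : ℕ) + 1 < n) (h : up i v = up i w) :
    v = w := by
  funext j
  by_cases hj : j = i
  · subst hj
    have := congrArg (fun u => (u j : ℕ)) h
    simp only [val_up_self hv, val_up_self hw] at this
    exact Fin.ext (by omega)
  · simpa [up_apply_of_ne hj] using congrFun h j

theorem eq_of_up_eq_up (hv : (v i : ℕ) + 1 < n) (h : up i v = up j v) : i = j := by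
  by_contra hij
  have := congrArg (fun u => (u i : ℕ)) h
  simp only [val_up_self hv, up_apply_of_ne hij] at this
  omega

def coordSum (v : Fin n → Fin n) : ℕ := ∑ i, (v i : ℕ)

theorem coordSum_up (h : (v i : ℕ) + 1 < n) : coordSum (up i v) = coordSum v + 1 := by
  unfold coordSum
  rw [← add_sum_erase _ _ (mem_univ i), ← add_sum_erase _ _ (mem_univ i), val_up_self h,
    sum_congr rfl fun j hj => by rw [up_apply_of_ne (ne_of_mem_erase hj)]]
  ring

theorem coordSum_add_coordSum_mod_two_of_adj (h : (gridGraphN n).Adj v w) :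
    (coordSum v + coordSum w) % 2 = 1 := by
  have hsum : ∑ i, ((v i : ℤ) - (w i : ℤ)).natAbs = 1 := h
  calc (coordSum v + coordSum w) % 2 = (∑ i, ((v i : ℕ) + (w i : ℕ)) % 2) % 2 := by
        rw [coordSum, coordSum, ← sum_add_distrib, sum_nat_mod]
    _ = (∑ i, ((v i : ℤ) - (w i : ℤ)).natAbs % 2) % 2 :=
        congrArg (· % 2) (sum_congr rfl fun i _ => by omega)
    _ = 1 := by rw [← sum_nat_mod, hsum]

theorem colorable_two : (gridGraphN n).Colorable 2 :=
  ⟨SimpleGraph.Coloring.mk (fun v => ⟨coordSum v % 2, Nat.mod_lt _ two_pos⟩) fun h heq => by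
    have := coordSum_add_coordSum_mod_two_of_adj h
    simp only [Fin.mk.injEq] at heq
    omega⟩

theorem cliqueFree_three : (gridGraphN n).CliqueFree 3 :=
  colorable_two.cliqueFree (by norm_num)

theorem card_filter_apply_eq (i x : Fin n) : #{v : Fin n → Fin n | v i = x} = n ^ (n - 1) := by
  simpa using Fintype.card_filter_piFinset_const_eq_of_mem (univ : Finset (Fin n)) i (mem_univ x)

theorem card_filter_val_apply_add_one_lt (i : Fin n) :
    #{v : Fin n → Fin n | (v i : ℕ) + 1 < n} = (n - 1) * n ^ (n - 1) := by
  have hlast : #{x : Fin n | (x : ℕ) + 1 < n} = n - 1 := by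
    rw [card_filter, Fin.sum_univ_eq_sum_range (fun x => if x + 1 < n then 1 else 0), ← card_filter]
    rw [show (range n).filter (· + 1 < n) = range (n - 1) by
      ext; simp only [mem_filter, mem_range]; omega, card_range]
  rw [card_eq_sum_card_fiberwise (f := fun v => v i) (t := {x : Fin n | (x : ℕ) + 1 < n})
    (fun v hv => by simpa using hv), sum_congr rfl fun x hx => ?_, sum_const, hlast, smul_eq_mul]
  rw [filter_filter, ← card_filter_apply_eq i x]
  congr 1
  ext v
  simp only [mem_filter, mem_univ, true_and] at hx ⊢
  exact ⟨And.right, fun h => ⟨h ▸ hx, h⟩⟩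

/-- The edges `{v, up i v}` of `G_n`, indexed by their lower end `v` and direction `i`. -/
def upSteps (n : ℕ) : Finset ((Fin n → Fin n) × Fin n) := {p | (p.1 p.2 : ℕ) + 1 < n}

theorem card_upSteps : #(upSteps n) = (n - 1) * n ^ n := by
  rw [upSteps, card_filter, Fintype.sum_prod_type_right]
  simp only [← card_filter, card_filter_val_apply_add_one_lt, sum_const, card_univ,
    Fintype.card_fin, smul_eq_mul]
  cases n with
  | zero => rfl
  | succ n => rw [add_tsub_cancel_right, pow_succ']; ring

theorem card_upSteps_le (C : Set (Fin n → Fin n)) :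
    #(upSteps n) ≤ #{p ∈ upSteps n | p.1 ∈ C ∧ up p.2 p.1 ∈ C} + 2 * n * #{v | v ∉ C} := by
  set D : Finset (Fin n → Fin n) := {v | v ∉ C}
  have hcard : #(D ×ˢ (univ : Finset (Fin n))) = n * #D := by
    rw [card_product, card_univ, Fintype.card_fin, mul_comm]
  have hlow : #{p ∈ upSteps n | p.1 ∉ C} ≤ n * #D :=
    hcard ▸ card_le_card fun p hp => by simp_all [D]
  have hhigh : #{p ∈ upSteps n | up p.2 p.1 ∉ C} ≤ n * #D := by
    refine hcard ▸ card_le_card_of_injOn (fun p => (up p.2 p.1, p.2))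
      (fun p hp => by simp_all [D]) ?_
    rintro ⟨v, i⟩ hv ⟨w, j⟩ hw h
    simp only [Prod.mk.injEq] at h
    obtain ⟨hup, rfl⟩ := h
    simp only [coe_filter, upSteps, mem_filter, mem_univ, true_and, Set.mem_ofPred_eq] at hv hw
    rw [up_injective hv.1 hw.1 hup]
  have hsplit : {p ∈ upSteps n | ¬(p.1 ∈ C ∧ up p.2 p.1 ∈ C)}
      = {p ∈ upSteps n | p.1 ∉ C} ∪ {p ∈ upSteps n | up p.2 p.1 ∉ C} := by
    rw [← filter_or]
    simp only [not_and_or]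
  calc #(upSteps n)
      = #{p ∈ upSteps n | p.1 ∈ C ∧ up p.2 p.1 ∈ C}
        + #{p ∈ upSteps n | ¬(p.1 ∈ C ∧ up p.2 p.1 ∈ C)} :=
        (card_filter_add_card_filter_not _).symm
    _ ≤ _ := by
      have := card_union_le {p ∈ upSteps n | p.1 ∉ C} {p ∈ upSteps n | up p.2 p.1 ∉ C}
      rw [hsplit]
      linarith

theorem two_mul_card_filter_upSteps_le (C : Set (Fin n → Fin n)) :
    2 * #{p ∈ upSteps n | p.1 ∈ C ∧ up p.2 p.1 ∈ C}
      ≤ ∑ v ∈ ({v | v ∈ C} : Finset _),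
        #{w ∈ ({v | v ∈ C} : Finset _) | (gridGraphN n).Adj v w} := by
  set W : Finset (Fin n → Fin n) := {v | v ∈ C}
  set good := {p ∈ upSteps n | p.1 ∈ C ∧ up p.2 p.1 ∈ C}
  have hgood : ∀ p ∈ good, (p.1 p.2 : ℕ) + 1 < n ∧ p.1 ∈ W ∧ up p.2 p.1 ∈ W := fun p hp => by
    simpa [good, upSteps, W] using hp
  set E := good.image fun p => (p.1, up p.2 p.1)
  have hE : #E = #good := by
    refine card_image_of_injOn ?_
    rintro ⟨v, i⟩ hv ⟨w, j⟩ - h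
    simp only [Prod.mk.injEq] at h
    obtain ⟨rfl, hup⟩ := h
    have hlt : (v i : ℕ) + 1 < n := (hgood _ hv).1
    rw [eq_of_up_eq_up hlt hup]
  -- `coordSum` increases by one along every edge of `E`, so no edge of `E` is reversed in `E`
  have hdisj : Disjoint E (E.image Prod.swap) := by
    refine disjoint_left.mpr fun q hq hq' => ?_
    obtain ⟨⟨v, i⟩, hv, rfl⟩ := mem_image.mp hq
    obtain ⟨_, hE', hswap⟩ := mem_image.mp hq'
    obtain ⟨⟨w, j⟩, hw, rfl⟩ := mem_image.mp hE'
    simp only [Prod.swap_prod_mk, Prod.mk.injEq] at hswap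
    have h₁ : coordSum (up i v) = coordSum v + 1 := coordSum_up (hgood _ hv).1
    have h₂ : coordSum (up j w) = coordSum w + 1 := coordSum_up (hgood _ hw).1
    rw [hswap.1, hswap.2] at h₂
    omega
  have hsub : E ⊆ {q ∈ W ×ˢ W | (gridGraphN n).Adj q.1 q.2} := by
    simp only [E, image_subset_iff, mem_filter, mem_product]
    intro p hp
    obtain ⟨hlt, hvW, hupW⟩ := hgood p hp
    exact ⟨⟨hvW, hupW⟩, adj_up hlt⟩
  have hsub' : E.image Prod.swap ⊆ {q ∈ W ×ˢ W | (gridGraphN n).Adj q.1 q.2} := by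
    simp only [image_subset_iff, mem_filter, mem_product, Prod.fst_swap, Prod.snd_swap]
    intro q hq
    obtain ⟨hq, hadj⟩ := mem_filter.mp (hsub hq)
    exact ⟨(mem_product.mp hq).symm, hadj.symm⟩
  rw [(gridGraphN n).sum_card_adj_eq_card_filter_adj, two_mul]
  calc #good + #good = #(E ∪ E.image Prod.swap) := by
        rw [card_union_of_disjoint hdisj, card_image_of_injective _ Prod.swap_injective, hE]
    _ ≤ _ := card_le_card (union_subset hsub hsub')

theorem le_treeAlpha_induce_of_two_mul_le {m n : ℕ} (hn : 3 * (m + 1) ≤ n)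
    {C : Set (Fin n → Fin n)} (hC : 2 * n ^ n ≤ 3 * #{v | v ∈ C}) :
    m ≤ treeAlpha ((gridGraphN n).induce C) := by
  set W : Finset (Fin n → Fin n) := {v | v ∈ C}
  have hWD : #W + #{v | v ∉ C} = n ^ n := by
    rw [card_filter_add_card_filter_not]
    simp
  have hpos : 0 < n ^ n := pow_pos (by omega) n
  refine le_treeAlpha_induce cliqueFree_three (fun v hv => by simpa [W] using hv)
    (card_pos.mp (by omega : 0 < #W)) ?_
  rw [mul_assoc]
  refine (Nat.mul_le_mul_left 2 ?_).trans (two_mul_card_filter_upSteps_le C)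
  have hup := card_upSteps_le C
  obtain ⟨k, rfl⟩ : ∃ k, n = k + 1 := ⟨n - 1, by omega⟩
  rw [card_upSteps, add_tsub_cancel_right] at hup
  nlinarith [Nat.mul_le_mul_left (k + 1) (by omega : 3 * #{v | v ∉ C} ≤ (k + 1) ^ (k + 1)),
    Nat.mul_le_mul_right ((k + 1) ^ (k + 1)) hn,
    Nat.mul_le_mul_left m (by omega : #W ≤ (k + 1) ^ (k + 1))]

theorem exists_mem_le_treeAlpha_induce {m n : ℕ} (hn : 3 * (m + 1) ≤ n) {β : ℝ} (hβ : 2 / 3 ≤ β)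
    {𝒞 : Multiset (Set (Fin n → Fin n))} (h𝒞 : IsGeneralCover β 𝒞) :
    ∃ C ∈ 𝒞, m ≤ treeAlpha ((gridGraphN n).induce C) := by
  obtain ⟨C, hC, hcard⟩ := h𝒞.exists_mem_le_card
  refine ⟨C, hC, le_treeAlpha_induce_of_two_mul_le hn ?_⟩
  simp only [Fintype.card_fun, Fintype.card_fin] at hcard
  have : (2 : ℝ) * (n ^ n : ℕ) ≤ 3 * #{v | v ∈ C} := by
    nlinarith [Nat.cast_nonneg (α := ℝ) (n ^ n)]
  exact_mod_cast this

end gridGraphN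

/-- For every `m` and every `r > 2` there is `n` such that every `(1 - 1/r)`-general
cover of the `n`-dimensional grid graph of width `n` has an element inducing a subgraph of
tree-independence number at least `m`; consequently, the class of these grid graphs is not
fractionally tree-α-fragile. -/
theorem stmt9 :
    (∀ m r : ℕ, 2 < r →
      ∃ n : ℕ, ∀ 𝒞 : Multiset (Set (Fin n → Fin n)),
        IsGeneralCover (1 - 1 / (r : ℝ)) 𝒞 →
        ∃ C ∈ 𝒞, m ≤ treeAlpha ((gridGraphN n).induce C)) ∧
    ¬ ∃ f : ℕ → ℕ, ∀ r n : ℕ,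
        ∃ 𝒞 : Multiset (Set (Fin n → Fin n)),
          IsGeneralCover (1 - 1 / (r : ℝ)) 𝒞 ∧
          ∀ C ∈ 𝒞, treeAlpha ((gridGraphN n).induce C) ≤ f r := by
  have hβ : ∀ r : ℕ, 2 < r → (2 / 3 : ℝ) ≤ 1 - 1 / r := fun r hr => by
    have : (3 : ℝ) ≤ r := by exact_mod_cast hr
    rw [le_sub_comm, div_le_iff₀ (by positivity)]
    nlinarith
  refine ⟨fun m r hr => ⟨3 * (m + 1), fun 𝒞 h𝒞 =>
    gridGraphN.exists_mem_le_treeAlpha_induce le_rfl (hβ r hr) h𝒞⟩, ?_⟩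
  rintro ⟨f, hf⟩
  obtain ⟨𝒞, h𝒞, hbound⟩ := hf 3 (3 * (f 3 + 1 + 1))
  obtain ⟨C, hC, hge⟩ :=
    gridGraphN.exists_mem_le_treeAlpha_induce le_rfl (hβ 3 (by norm_num)) h𝒞
  have := hbound C hC
  omega
end
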